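/- Let G be a subgroup of Aut(T) acting transitively on every level of the rooted p-adic tree T, and suppose G is fractal (for every vertex u, the image of the vertex stabiliser St_G(u) under the section map φ_u equals G). If G is regular branch over a subgroup K ≤ St_G(1) such that ψ_1(K) contains K × ··· × K (p copies) and the projection of ψ_1(K) to each of the p coordinates equals G, then G is super strongly fractal: for every n and every level-n vertex u, φ_u(St_G(n)) = G. -/

import Mathlib

/-- The automorphism group of the rooted `p`-adic tree, realised as the
permutations of the vertex set (finite words over `Fin p`) that preserve
word length (i.e. levels, hence the root) and the prefix (edge) relation. -/
def treeAut (p : ℕ) : Subgroup (Equiv.Perm (List (Fin p))) where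
  carrier := {f | (∀ w : List (Fin p), (f w).length = w.length) ∧
    ∀ w v : List (Fin p), w <+: v ↔ f w <+: f v}
  one_mem' := ⟨fun _ => rfl, fun _ _ => Iff.rfl⟩
  mul_mem' := fun {f g} hf hg =>
    ⟨fun w => by
      simp only [Equiv.Perm.mul_apply]
      exact (hf.1 (g w)).trans (hg.1 w),
     fun w v => by
      simp only [Equiv.Perm.mul_apply]
      exact (hg.2 w v).trans (hf.2 (g w) (g v))⟩
  inv_mem' := fun {f} hf =>
    ⟨fun w => by
      have h := hf.1 (f⁻¹ w)
      rw [show ∀ x, f (f⁻¹ x) = x from f.apply_symm_apply] at h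
      exact h.symm,
     fun w v => by
      have h := (hf.2 (f⁻¹ w) (f⁻¹ v))
      rw [show ∀ x, f (f⁻¹ x) = x from f.apply_symm_apply, show ∀ x, f (f⁻¹ x) = x from f.apply_symm_apply] at h
      exact h.symm⟩

/-- The `n`-th level stabiliser inside the full permutation group: all
permutations fixing every vertex (word) of length `n`. -/
def levelStab (p n : ℕ) : Subgroup (Equiv.Perm (List (Fin p))) where
  carrier := {f | ∀ w : List (Fin p), w.length = n → f w = w}
  one_mem' := fun _ _ => rfl
  mul_mem' := fun {f g} hf hg w hw => by
    simp only [Equiv.Perm.mul_apply]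
    rw [hg w hw, hf w hw]
  inv_mem' := fun {f} hf w hw => by
    conv_lhs => rw [← hf w hw]
    exact f.symm_apply_apply w

/-- `g` is the section of `f` at the vertex `u`: `f` maps the subtree rooted
at `u` to itself, acting as `g` does on the subtree identified with `T`. -/
def IsSectionAt (p : ℕ) (f : Equiv.Perm (List (Fin p))) (u : List (Fin p))
    (g : Equiv.Perm (List (Fin p))) : Prop :=
  ∀ v : List (Fin p), f (u ++ v) = u ++ g v

/-- The set of sections at the vertex `u` of elements of `H` (necessarily of
elements of `H` stabilising `u`); this is `φ_u(St_H(u))`. -/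
def sectionSet (p : ℕ) (H : Subgroup (Equiv.Perm (List (Fin p)))) (u : List (Fin p)) :
    Set (Equiv.Perm (List (Fin p))) :=
  {g | ∃ f ∈ H, IsSectionAt p f u g}

/-- A fractal, spherically transitive group `G ≤ Aut(T)` that is regular
branch over a subgroup `K ≤ St_G(1)` with `K × ⋯ × K ⊆ ψ_1(K)` and with every
first-level projection of `ψ_1(K)` equal to `G` is super strongly fractal:
for every `n` and every level-`n` vertex `u`, `φ_u(St_G(n)) = G`. -/
theorem super_strongly_fractal_of_regular_branch (p : ℕ) (hp : p.Prime)
    (G K : Subgroup (Equiv.Perm (List (Fin p))))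
    (hG : G ≤ treeAut p)
    -- spherical transitivity
    (htrans : ∀ u v : List (Fin p), u.length = v.length → ∃ g ∈ G, g u = v)
    -- fractal
    (hfractal : ∀ u : List (Fin p), sectionSet p G u = (G : Set (Equiv.Perm (List (Fin p)))))
    -- self-similarity (part of being regular branch)
    (hss : ∀ f ∈ G, ∀ u : List (Fin p), f u = u → ∃ g ∈ G, IsSectionAt p f u g)
    -- K is a branching subgroup: K ≤ St_G(1), |G : K| < ∞, K × ⋯ × K ⊆ ψ_1(K)
    (hKG : K ≤ G) (hK1 : K ≤ levelStab p 1)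
    (hfi : (K.subgroupOf G).FiniteIndex)
    (hbr : ∀ k : Fin p → Equiv.Perm (List (Fin p)), (∀ x, k x ∈ K) →
      ∃ f ∈ K, ∀ x : Fin p, IsSectionAt p f [x] (k x))
    -- each first-level projection of ψ_1(K) equals G
    (hproj : ∀ x : Fin p, sectionSet p K [x] = (G : Set (Equiv.Perm (List (Fin p))))) :
    ∀ (n : ℕ) (u : List (Fin p)), u.length = n →
      sectionSet p (G ⊓ levelStab p n) u = (G : Set (Equiv.Perm (List (Fin p)))) := by

  -- K branches over every level: any assignment of elements of K to the
  -- level-n vertices is realised by the sections of a single element of K.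
  have branchK : ∀ (n : ℕ) (c : List (Fin p) → Equiv.Perm (List (Fin p))),
      (∀ w, w.length = n → c w ∈ K) →
      ∃ f ∈ K, ∀ w, w.length = n → IsSectionAt p f w (c w) := by
    intro n
    induction n with
    | zero =>
      intro c hc
      refine ⟨c [], hc [] rfl, ?_⟩
      intro w hw
      rw [List.length_eq_zero_iff] at hw
      subst hw
      intro v
      simp
    | succ n ih =>
      intro c hc
      have hx : ∀ x : Fin p, ∃ fx ∈ K, ∀ w, w.length = n →
          IsSectionAt p fx w (c ([x] ++ w)) := fun x =>
        ih (fun w => c ([x] ++ w)) (fun w hw => hc _ (by simp [hw]))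
      choose fx hfxK hfx using hx
      obtain ⟨f, hfK, hf⟩ := hbr fx hfxK
      refine ⟨f, hfK, ?_⟩
      intro w hw
      match w with
      | [] => simp at hw
      | x :: w' =>
        intro v
        have h1 := hf x (w' ++ v)
        have h2 := hfx x w' (by simpa using hw) v
        simp only [List.singleton_append] at h1 h2 ⊢
        rw [show (x :: w') ++ v = x :: (w' ++ v) by simp, h1, h2]
        simp
  intro n u hu
  ext g
  constructor
  · rintro ⟨f, ⟨hfG, hfS⟩, hsec⟩
    obtain ⟨g', hg'G, hg'sec⟩ := hss f hfG u (hfS u hu)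
    have : g = g' := Equiv.ext fun v =>
      List.append_cancel_left ((hsec v).symm.trans (hg'sec v))
    rwa [this]
  · intro hg
    cases n with
    | zero =>
      rw [List.length_eq_zero_iff] at hu; subst hu
      refine ⟨g, ⟨hg, ?_⟩, fun v => by simp⟩
      intro w hw
      rw [List.length_eq_zero_iff] at hw; subst hw
      exact List.length_eq_zero_iff.mp ((hG hg).1 [])
    | succ n =>
      obtain ⟨w, x, rfl⟩ : ∃ w x, u = w ++ [x] := by
        rcases List.eq_nil_or_concat u with h | ⟨w, x, h⟩
        · subst h; simp at hu
        · exact ⟨w, x, by simpa [List.concat_eq_append] using h⟩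
      have hw : w.length = n := by simpa using hu
      have hgK : g ∈ sectionSet p K [x] := by rw [hproj x]; exact hg
      obtain ⟨k, hkK, hksec⟩ := hgK
      obtain ⟨f, hfK, hf⟩ := branchK n (fun _ => k) (fun _ _ => hkK)
      refine ⟨f, ⟨hKG hfK, ?_⟩, ?_⟩
      · intro w' hw'
        obtain ⟨w'', y, rfl⟩ : ∃ w'' y, w' = w'' ++ [y] := by
          rcases List.eq_nil_or_concat w' with h | ⟨a, b, h⟩
          · subst h; simp at hw'
          · exact ⟨a, b, by simpa [List.concat_eq_append] using h⟩
        have hw'' : w''.length = n := by simpa using hw'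
        rw [hf w'' hw'' [y], hK1 hkK [y] rfl]
      · intro v
        rw [List.append_assoc, hf w hw ([x] ++ v), hksec v, List.append_assoc]
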